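/- Let m be a deficient number with deficience d = 2m − σ(m), and let p_1, …, p_k be primes with m < p_1 < p_2 < ⋯ < p_k. If p_1 > 2km/d − k/2, then m·p_1⋯p_k is deficient. -/

import Mathlib

/-- `sigma' n` is the sum of all divisors of `n` (including `n`). -/
def sigma' (n : ℕ) : ℕ := ∑ d ∈ n.divisors, d

/-- A natural number is abundant if `σ(n) > 2n`. -/
def Abundant (n : ℕ) : Prop := 2 * n < sigma' n

/-- A natural number is deficient if `σ(n) < 2n`. -/
def Deficient (n : ℕ) : Prop := sigma' n < 2 * n

/-- A natural number is semiperfect if it is the sum of some set of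
its distinct proper divisors. -/
def Semiperfect (n : ℕ) : Prop := ∃ S ⊆ n.properDivisors, ∑ d ∈ S, d = n

/-- A natural number is weird if it is abundant but not semiperfect. -/
def Weird (n : ℕ) : Prop := Abundant n ∧ ¬ Semiperfect n

/-!
Since the `p i` are distinct primes exceeding `m`, `σ` is multiplicative along the product:
`σ(m p₀ ⋯ p_{k-1}) = σ(m) ∏ (p i + 1)`. The primes grow at least by one at each step, so
`∏ (1 + 1/p i) ≤ ∏ (1 + 1/(p₀ + i)) = (p₀ + k)/p₀`, and it remains to see that
`σ(m) (p₀ + k) < 2 m p₀`, i.e. `2km < d (p₀ + k)`, which follows from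
`2km < d (p₀ + k/2)`.
-/

open Finset

lemma sigma'_mul_of_coprime {a b : ℕ} (h : a.Coprime b) : sigma' (a * b) = sigma' a * sigma' b :=
  Nat.Coprime.sum_divisors_mul h

lemma sigma'_of_prime {q : ℕ} (hq : q.Prime) : sigma' q = q + 1 := by
  simp [sigma', hq.sum_divisors]

lemma Deficient.pos {m : ℕ} (hm : Deficient m) : 0 < m :=
  Nat.pos_of_ne_zero <| by rintro rfl; simp [Deficient, sigma'] at hm

lemma sigma'_mul_prod_primes {m k : ℕ} {p : ℕ → ℕ} (hprime : ∀ i < k, (p i).Prime)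
    (hne : ∀ i j, i < j → j < k → p i ≠ p j) (hcop : ∀ i < k, m.Coprime (p i)) :
    sigma' (m * ∏ i ∈ range k, p i) = sigma' m * ∏ i ∈ range k, (p i + 1) := by
  induction k with
  | zero => simp
  | succ k ih =>
    have hcop_k : (m * ∏ i ∈ range k, p i).Coprime (p k) := by
      refine Nat.Coprime.mul_left (hcop k k.lt_succ_self) (Nat.Coprime.prod_left fun i hi => ?_)
      have hik := mem_range.mp hi
      exact (Nat.coprime_primes (hprime i (by omega)) (hprime k k.lt_succ_self)).mpr
        (hne i k hik k.lt_succ_self)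
    rw [prod_range_succ, ← mul_assoc, sigma'_mul_of_coprime hcop_k,
      ih (fun i hi => hprime i (by omega)) (fun i j hij hj => hne i j hij (by omega))
        (fun i hi => hcop i (by omega)),
      sigma'_of_prime (hprime k k.lt_succ_self), prod_range_succ, mul_assoc]

lemma add_le_of_strictMonoOn_range {k : ℕ} {p : ℕ → ℕ}
    (hmono : ∀ i j, i < j → j < k → p i < p j) : ∀ i < k, p 0 + i ≤ p i := by
  intro i hi
  induction i with
  | zero => rfl
  | succ i ih =>
    have := ih (by omega)
    have := hmono i (i + 1) i.lt_succ_self hi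
    omega

/-- Integer form of `∏ (1 + 1/p i) ≤ (a + k)/a` for `a + i ≤ p i`. -/
lemma mul_prod_add_one_le {a k : ℕ} {p : ℕ → ℕ} (h : ∀ i < k, a + i ≤ p i) :
    a * ∏ i ∈ range k, (p i + 1) ≤ (a + k) * ∏ i ∈ range k, p i := by
  induction k with
  | zero => simp
  | succ k ih =>
    have ih := ih (fun i hi => h i (by omega))
    have hk := h k k.lt_succ_self
    rw [prod_range_succ, prod_range_succ]
    calc a * ((∏ i ∈ range k, (p i + 1)) * (p k + 1))
        = (a * ∏ i ∈ range k, (p i + 1)) * (p k + 1) := by ring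
      _ ≤ ((a + k) * ∏ i ∈ range k, p i) * (p k + 1) := Nat.mul_le_mul_right _ ih
      _ = (∏ i ∈ range k, p i) * ((a + k) * (p k + 1)) := by ring
      _ ≤ (∏ i ∈ range k, p i) * ((a + (k + 1)) * p k) := by
          apply Nat.mul_le_mul_left; nlinarith
      _ = (a + (k + 1)) * ((∏ i ∈ range k, p i) * p k) := by ring

lemma sigma'_mul_add_lt {m k a : ℕ} (hm : Deficient m)
    (ha : (a : ℚ) > 2 * k * m / (2 * m - sigma' m) - k / 2) :
    sigma' m * (a + k) < 2 * m * a := by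
  have hd : (0 : ℚ) < 2 * m - sigma' m := by
    have : (sigma' m : ℚ) < 2 * m := by exact_mod_cast hm
    linarith
  have hka : 2 * (k : ℚ) * m < (a + k / 2) * (2 * m - sigma' m) :=
    (div_lt_iff₀ hd).mp (by linarith)
  have hs : (0 : ℚ) ≤ sigma' m := Nat.cast_nonneg _
  have hk : (0 : ℚ) ≤ k := Nat.cast_nonneg _
  suffices (sigma' m : ℚ) * (a + k) < 2 * m * a by exact_mod_cast this
  nlinarith

theorem deficient_of_primes_large_general (m k : ℕ) (p : ℕ → ℕ)
    (hm : Deficient m)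
    (hprime : ∀ i < k, (p i).Prime)
    (hmp : m < p 0)
    (hmono : ∀ i j, i < j → j < k → p i < p j)
    (hp1 : (p 0 : ℚ) > 2 * k * m / (2 * m - sigma' m) - k / 2) :
    Deficient (m * ∏ i ∈ Finset.range k, p i) := by
  have hgrowth := add_le_of_strictMonoOn_range hmono
  have hcop : ∀ i < k, m.Coprime (p i) := fun i hi =>
    (Nat.coprime_of_lt_prime hm.pos.ne' (by linarith [hgrowth i hi]) (hprime i hi)).symm
  have hprod_pos : 0 < ∏ i ∈ range k, p i :=
    prod_pos fun i hi => (hprime i (mem_range.mp hi)).pos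
  unfold Deficient
  rw [sigma'_mul_prod_primes hprime (fun i j hij hj => (hmono i j hij hj).ne) hcop]
  refine lt_of_mul_lt_mul_left (a := p 0) ?_ (Nat.zero_le _)
  calc p 0 * (sigma' m * ∏ i ∈ range k, (p i + 1))
      = sigma' m * (p 0 * ∏ i ∈ range k, (p i + 1)) := by ring
    _ ≤ sigma' m * ((p 0 + k) * ∏ i ∈ range k, p i) :=
        Nat.mul_le_mul_left _ (mul_prod_add_one_le hgrowth)
    _ = (sigma' m * (p 0 + k)) * ∏ i ∈ range k, p i := by ring
    _ < (2 * m * p 0) * ∏ i ∈ range k, p i :=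
        Nat.mul_lt_mul_of_pos_right (sigma'_mul_add_lt hm hp1) hprod_pos
    _ = p 0 * (2 * (m * ∏ i ∈ range k, p i)) := by ring

/-- Theorem 5(ii).  If `m` is deficient with deficience `d = 2m − σ(m)`, and
`p 0 < p 1 < ⋯ < p (k-1)` are primes with `m < p 0` and
`p 0 > 2km/d − k/2`, then `m · p 0 ⋯ p (k-1)` is deficient. -/
theorem deficient_of_primes_large (m k : ℕ) (p : ℕ → ℕ)
    (hm : Deficient m) (hk : 0 < k)
    (hprime : ∀ i < k, (p i).Prime)
    (hmp : m < p 0)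
    (hmono : ∀ i j, i < j → j < k → p i < p j)
    (hp1 : (p 0 : ℚ) > 2 * k * m / (2 * m - sigma' m) - k / 2) :
    Deficient (m * ∏ i ∈ Finset.range k, p i) :=
  deficient_of_primes_large_general m k p hm hprime hmp hmono hp1
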